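/- arXiv:1811.05051 — 4 statements merged into one kernel-verified Lean document; each statement's English description precedes it below -/
import Mathlib

section
/- Let p > 1 and let δ ≤ β < p − 1 be real numbers, let t ∈ (0, 1], M > 0 and E ≥ 1. Define m₂ = max{1, (3ME/t^{p−1})^{1/(p−1−β)}} and τ = 1/(p−1−δ). Then for every α with 0 < α ≤ 1, the inequality (α^τ m₂ t)^{p−1} ≥ α M E (m₂^δ α^{τδ} + m₂^β α^{τβ}) holds. -/
/-!
Write `A = α ^ (τ * (p - 1))`. Since `τ * (p - 1) = 1 + τ * δ ≤ 1 + τ * β` and `α ≤ 1`, both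
`α * α ^ (τ * δ)` and `α * α ^ (τ * β)` are at most `A`, and `m₂ ^ δ ≤ m₂ ^ β` as `m₂ ≥ 1`; so the
left side is at most `2 M E m₂ ^ β A`. The choice of `m₂` gives `3 M E ≤ m₂ ^ (p - 1 - β) t ^ (p - 1)`,
and the right side is `m₂ ^ β A m₂ ^ (p - 1 - β) t ^ (p - 1)`.
-/

open Real

lemma le_rpow_mul_of_div_rpow_one_div_le {K s c m : ℝ} (hK : 0 ≤ K) (hs : 0 < s) (hc : 0 < c)
    (hm : (K / s) ^ (1 / c) ≤ m) : K ≤ m ^ c * s := by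
  have hm0 : 0 ≤ m := (rpow_nonneg (div_nonneg hK hs.le) _).trans hm
  rw [one_div, rpow_inv_le_iff_of_pos (div_nonneg hK hs.le) hm0 hc] at hm
  exact (div_le_iff₀ hs).1 hm

lemma mul_rpow_le_rpow_of_le_one_add {α a b : ℝ} (hα0 : 0 < α) (hα1 : α ≤ 1) (hab : b ≤ 1 + a) :
    α * α ^ a ≤ α ^ b := by
  rw [mul_comm, ← rpow_add_one hα0.ne', add_comm a]
  exact rpow_le_rpow_of_exponent_ge hα0 hα1 hab

theorem stmt_1_general (p δ β t M E : ℝ)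
    (hδβ : δ ≤ β) (hβ : β < p - 1)
    (ht : t ∈ Set.Ioc (0:ℝ) 1) (hM : 0 < M) (hE : 1 ≤ E)
    (m₂ τ : ℝ)
    (hm₂ : m₂ = max 1 ((3 * M * E / t ^ (p - 1)) ^ (1 / (p - 1 - β))))
    (hτ : τ = 1 / (p - 1 - δ)) :
    ∀ α : ℝ, 0 < α → α ≤ 1 →
      α * M * E * (m₂ ^ δ * α ^ (τ * δ) + m₂ ^ β * α ^ (τ * β)) ≤
        (α ^ τ * m₂ * t) ^ (p - 1) := by
  intro α hα0 hα1
  have ht0 : 0 < t := ht.1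
  have hME : 0 ≤ M * E := by positivity
  have hm₂1 : 1 ≤ m₂ := hm₂ ▸ le_max_left _ _
  have hm₂0 : 0 < m₂ := one_pos.trans_le hm₂1
  have hττ : τ * (p - 1) = 1 + τ * δ := by
    rw [hτ]; field_simp [(by linarith : p - 1 - δ ≠ 0)]; ring
  have hgap : 3 * M * E ≤ m₂ ^ (p - 1 - β) * t ^ (p - 1) :=
    le_rpow_mul_of_div_rpow_one_div_le (by positivity) (by positivity) (by linarith)
      (hm₂ ▸ le_max_right _ _)
  have hαδ : α * α ^ (τ * δ) ≤ α ^ (τ * (p - 1)) :=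
    mul_rpow_le_rpow_of_le_one_add hα0 hα1 hττ.le
  have hαβ : α * α ^ (τ * β) ≤ α ^ (τ * (p - 1)) := by
    have hτ0 : 0 ≤ τ := by rw [hτ]; exact (one_div_pos.2 (by linarith)).le
    exact mul_rpow_le_rpow_of_le_one_add hα0 hα1 (by nlinarith)
  have hmδβ : m₂ ^ δ ≤ m₂ ^ β := rpow_le_rpow_of_exponent_le hm₂1 hδβ
  have hrhs : (α ^ τ * m₂ * t) ^ (p - 1)
      = α ^ (τ * (p - 1)) * (m₂ ^ β * m₂ ^ (p - 1 - β) * t ^ (p - 1)) := by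
    rw [mul_rpow (by positivity) ht0.le, mul_rpow (by positivity) hm₂0.le, ← rpow_mul hα0.le,
      ← rpow_add hm₂0, add_sub_cancel]
    ring
  calc α * M * E * (m₂ ^ δ * α ^ (τ * δ) + m₂ ^ β * α ^ (τ * β))
      = M * E * (m₂ ^ δ * (α * α ^ (τ * δ)) + m₂ ^ β * (α * α ^ (τ * β))) := by ring
    _ ≤ M * E * (m₂ ^ β * α ^ (τ * (p - 1)) + m₂ ^ β * α ^ (τ * (p - 1))) := by gcongr
    _ = 2 * (M * E) * (m₂ ^ β * α ^ (τ * (p - 1))) := by ring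
    _ ≤ m₂ ^ (p - 1 - β) * t ^ (p - 1) * (m₂ ^ β * α ^ (τ * (p - 1))) := by gcongr ?_ * _; linarith
    _ = (α ^ τ * m₂ * t) ^ (p - 1) := by rw [hrhs]; ring

theorem stmt_1 (p δ β t M E : ℝ)
    (hp : 1 < p) (hδβ : δ ≤ β) (hβ : β < p - 1)
    (ht : t ∈ Set.Ioc (0:ℝ) 1) (hM : 0 < M) (hE : 1 ≤ E)
    (m₂ τ : ℝ)
    (hm₂ : m₂ = max 1 ((3 * M * E / t ^ (p - 1)) ^ (1 / (p - 1 - β))))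
    (hτ : τ = 1 / (p - 1 - δ)) :
    ∀ α : ℝ, 0 < α → α ≤ 1 →
      α * M * E * (m₂ ^ δ * α ^ (τ * δ) + m₂ ^ β * α ^ (τ * β)) ≤
        (α ^ τ * m₂ * t) ^ (p - 1) :=
  stmt_1_general p δ β t M E hδβ hβ ht hM hE m₂ τ hm₂ hτ
end

section
/- Let p > 1 and let δ ≤ β < p − 1 be real numbers, let t ∈ (0, 1], M > 0 and E ≥ 1. Define m₂ = max{1, (3ME/t^{p−1})^{1/(p−1−β)}} and τ = 1/(p−1−β). Then for every α ≥ 1, the inequality (α^τ m₂ t)^{p−1} ≥ α M E (m₂^δ α^{τδ} + m₂^β α^{τβ}) holds. -/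
/-!
Put `x = α^τ m₂ ≥ 1`. Then `m₂^δ α^{τδ} + m₂^β α^{τβ} = x^δ + x^β ≤ 2 x^β`, while `τ (p - 1 - β) = 1`
gives `x^{p-1-β} = α m₂^{p-1-β}`, and the choice of `m₂` makes `m₂^{p-1-β} t^{p-1} ≥ 3ME`. Hence
`(x t)^{p-1} = x^β · α m₂^{p-1-β} t^{p-1} ≥ 3αME x^β ≥ αME (x^δ + x^β)`.
-/

open Real

lemma rpow_add_rpow_le_two_mul_rpow {x δ β : ℝ} (hx : 1 ≤ x) (hδβ : δ ≤ β) :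
    x ^ δ + x ^ β ≤ 2 * x ^ β := by
  linarith [rpow_le_rpow_of_exponent_le hx hδβ]

lemma rpow_mul_rpow_mul_eq {a m : ℝ} (ha : 0 ≤ a) (hm : 0 ≤ m) (τ δ : ℝ) :
    m ^ δ * a ^ (τ * δ) = (a ^ τ * m) ^ δ := by
  rw [mul_rpow (rpow_nonneg ha τ) hm, rpow_mul ha, mul_comm]

lemma le_max_one_rpow_one_div_rpow_mul {c s r : ℝ} (hc : 0 ≤ c) (hs : 0 < s) (hr : 0 < r) :
    c ≤ max 1 ((c / s) ^ (1 / r)) ^ r * s := by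
  have h : (c / s) ^ r⁻¹ ≤ max 1 ((c / s) ^ (1 / r)) := by
    rw [← one_div]; exact le_max_right _ _
  rw [rpow_inv_le_iff_of_pos (by positivity) (by positivity) hr, div_le_iff₀ hs] at h
  exact h

theorem stmt_2_general (p δ β t M E : ℝ)
    (hδβ : δ ≤ β) (hβ : β < p - 1)
    (ht : t ∈ Set.Ioc (0:ℝ) 1) (hM : 0 < M) (hE : 1 ≤ E)
    (m₂ τ : ℝ)
    (hm₂ : m₂ = max 1 ((3 * M * E / t ^ (p - 1)) ^ (1 / (p - 1 - β))))
    (hτ : τ = 1 / (p - 1 - β)) :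
    ∀ α : ℝ, 1 ≤ α →
      α * M * E * (m₂ ^ δ * α ^ (τ * δ) + m₂ ^ β * α ^ (τ * β)) ≤
        (α ^ τ * m₂ * t) ^ (p - 1) := by
  intro α hα
  have hγ : 0 < p - 1 - β := by linarith
  have ht0 : 0 < t := ht.1
  have hE0 : 0 < E := by linarith
  have hm₂1 : 1 ≤ m₂ := hm₂ ▸ le_max_left _ _
  have hm₂t : 3 * M * E ≤ m₂ ^ (p - 1 - β) * t ^ (p - 1) :=
    hm₂ ▸ le_max_one_rpow_one_div_rpow_mul (by positivity) (by positivity) hγ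
  rw [rpow_mul_rpow_mul_eq (by positivity) (by positivity),
    rpow_mul_rpow_mul_eq (by positivity) (by positivity)]
  set x := α ^ τ * m₂ with hx
  have hx1 : 1 ≤ x := one_le_mul_of_one_le_of_one_le (one_le_rpow hα (by rw [hτ]; positivity)) hm₂1
  have hxγ : x ^ (p - 1 - β) = α * m₂ ^ (p - 1 - β) := by
    rw [hx, mul_rpow (by positivity) (by positivity), ← rpow_mul (by positivity), hτ,
      one_div_mul_cancel hγ.ne', rpow_one]
  calc α * M * E * (x ^ δ + x ^ β)
      ≤ α * M * E * (2 * x ^ β) := by gcongr; exact rpow_add_rpow_le_two_mul_rpow hx1 hδβ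
    _ ≤ α * x ^ β * (3 * M * E) := by linarith [show 0 ≤ α * M * E * x ^ β by positivity]
    _ ≤ α * x ^ β * (m₂ ^ (p - 1 - β) * t ^ (p - 1)) := by gcongr
    _ = x ^ β * x ^ (p - 1 - β) * t ^ (p - 1) := by rw [hxγ]; ring
    _ = (x * t) ^ (p - 1) := by
      rw [← rpow_add (by positivity), mul_rpow (by positivity) ht0.le]; ring_nf

theorem stmt_2 (p δ β t M E : ℝ)
    (hp : 1 < p) (hδβ : δ ≤ β) (hβ : β < p - 1)
    (ht : t ∈ Set.Ioc (0:ℝ) 1) (hM : 0 < M) (hE : 1 ≤ E)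
    (m₂ τ : ℝ)
    (hm₂ : m₂ = max 1 ((3 * M * E / t ^ (p - 1)) ^ (1 / (p - 1 - β))))
    (hτ : τ = 1 / (p - 1 - β)) :
    ∀ α : ℝ, 1 ≤ α →
      α * M * E * (m₂ ^ δ * α ^ (τ * δ) + m₂ ^ β * α ^ (τ * β)) ≤
        (α ^ τ * m₂ * t) ^ (p - 1) :=
  stmt_2_general p δ β t M E hδβ hβ ht hM hE m₂ τ hm₂ hτ
end

section
/- Let p > 1, let δ ≤ β < p − 1 be real numbers, and let λ₁ > 0, m > 0, S > 0 and a ∈ (0, 1). Define τ = 1/(p−1−β) and m₁ = m^τ/(S λ₁^τ). Then for every α ≥ λ₁ a^{p−1−δ}/m and every s ∈ (0, S]: if m₁ α^τ s < a then λ₁ (m₁ α^τ)^{p−1} s^{p−1} ≤ α m (m₁ α^τ s)^δ, and if m₁ α^τ s ≥ a then λ₁ (m₁ α^τ)^{p−1} s^{p−1} ≤ α m (m₁ α^τ s)^β. -/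
/-!
Write `A = m₁ α^τ` and `e = p - 1 - β`. The constant `m₁` is chosen so that `λ₁ (A S)^e = α m`,
i.e. the pure power `β` is balanced exactly at `s = S`. For `s ≤ S` one then has
`λ₁ (A s)^(p-1) = λ₁ (A s)^e (A s)^β ≤ λ₁ (A S)^e (A s)^β = α m (A s)^β`, which is the case `A s ≥ a`.
When `A s < a < 1` the power `δ ≤ β` only makes the right-hand side larger.
-/

open Real

theorem rpow_le_rpow_mul_rpow_sub {x y β q : ℝ} (hx : 0 < x) (hxy : x ≤ y) (hβq : β ≤ q) :
    x ^ q ≤ x ^ β * y ^ (q - β) :=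
  calc x ^ q = x ^ β * x ^ (q - β) := by rw [← rpow_add hx]; ring_nf
    _ ≤ x ^ β * y ^ (q - β) := by gcongr

theorem mul_rpow_normalizing_const_eq {m lam α S τ : ℝ} (hm : 0 < m) (hlam : 0 < lam)
    (hα : 0 < α) (hS : 0 < S) :
    m ^ τ / (S * lam ^ τ) * α ^ τ * S = (α * m / lam) ^ τ := by
  rw [div_rpow (by positivity) hlam.le, mul_rpow hα.le hm.le]
  field_simp

theorem stmt_4_general (p δ β lam₁ m S a : ℝ)
    (hδβ : δ ≤ β) (hβ : β < p - 1) (hlam₁ : 0 < lam₁) (hm : 0 < m) (hS : 0 < S)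
    (ha : a ∈ Set.Ioo (0:ℝ) 1)
    (τ m₁ : ℝ) (hτ : τ = 1 / (p - 1 - β)) (hm₁ : m₁ = m ^ τ / (S * lam₁ ^ τ)) :
    ∀ α : ℝ, lam₁ * a ^ (p - 1 - δ) / m ≤ α →
      ∀ s : ℝ, 0 < s → s ≤ S →
        (m₁ * α ^ τ * s < a →
          lam₁ * (m₁ * α ^ τ) ^ (p - 1) * s ^ (p - 1) ≤ α * m * (m₁ * α ^ τ * s) ^ δ) ∧
        (a ≤ m₁ * α ^ τ * s →
          lam₁ * (m₁ * α ^ τ) ^ (p - 1) * s ^ (p - 1) ≤ α * m * (m₁ * α ^ τ * s) ^ β) := by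
  intro α hα s hs hsS
  obtain ⟨ha0, ha1⟩ := ha
  have hα0 : 0 < α := (by positivity : 0 < lam₁ * a ^ (p - 1 - δ) / m).trans_le hα
  have hA : 0 < m₁ * α ^ τ := by rw [hm₁]; positivity
  have hbalance : lam₁ * (m₁ * α ^ τ * S) ^ (p - 1 - β) = α * m := by
    rw [hm₁, mul_rpow_normalizing_const_eq hm hlam₁ hα0 hS, hτ, one_div,
      rpow_inv_rpow (by positivity) (by linarith)]
    field_simp
  have hpower_β : lam₁ * (m₁ * α ^ τ) ^ (p - 1) * s ^ (p - 1)
      ≤ α * m * (m₁ * α ^ τ * s) ^ β :=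
    calc lam₁ * (m₁ * α ^ τ) ^ (p - 1) * s ^ (p - 1)
        = lam₁ * (m₁ * α ^ τ * s) ^ (p - 1) := by rw [mul_rpow hA.le hs.le]; ring
      _ ≤ lam₁ * ((m₁ * α ^ τ * s) ^ β * (m₁ * α ^ τ * S) ^ (p - 1 - β)) := by
          gcongr
          exact rpow_le_rpow_mul_rpow_sub (by positivity) (by gcongr) hβ.le
      _ = α * m * (m₁ * α ^ τ * s) ^ β := by rw [← hbalance]; ring
  refine ⟨fun hlt => hpower_β.trans ?_, fun _ => hpower_β⟩
  exact mul_le_mul_of_nonneg_left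
    (rpow_le_rpow_of_exponent_ge (by positivity) (hlt.trans ha1).le hδβ) (by positivity)

theorem stmt_4 (p δ β lam₁ m S a : ℝ)
    (hp : 1 < p) (hδβ : δ ≤ β) (hβ : β < p - 1) (hlam₁ : 0 < lam₁) (hm : 0 < m) (hS : 0 < S)
    (ha : a ∈ Set.Ioo (0:ℝ) 1)
    (τ m₁ : ℝ) (hτ : τ = 1 / (p - 1 - β)) (hm₁ : m₁ = m ^ τ / (S * lam₁ ^ τ)) :
    ∀ α : ℝ, lam₁ * a ^ (p - 1 - δ) / m ≤ α →
      ∀ s : ℝ, 0 < s → s ≤ S →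
        (m₁ * α ^ τ * s < a →
          lam₁ * (m₁ * α ^ τ) ^ (p - 1) * s ^ (p - 1) ≤ α * m * (m₁ * α ^ τ * s) ^ δ) ∧
        (a ≤ m₁ * α ^ τ * s →
          lam₁ * (m₁ * α ^ τ) ^ (p - 1) * s ^ (p - 1) ≤ α * m * (m₁ * α ^ τ * s) ^ β) :=
  stmt_4_general p δ β lam₁ m S a hδβ hβ hlam₁ hm hS ha τ m₁ hτ hm₁
end

section
/- Let X be a nonempty compact topological space, let δ ≤ β be real numbers, and let f : X × ℝ → ℝ be continuous and strictly positive on X × (0, ∞). Let c₀, c_∞ : X → ℝ be continuous with c₀(x) > 0 and c_∞(x) > 0 for all x ∈ X, and assume that f(x,t)/t^δ → c₀(x) as t → 0⁺ uniformly in x ∈ X, and f(x,t)/t^β → c_∞(x) as t → ∞ uniformly in x ∈ X. Then there exist constants m > 0, M > 0 and a ∈ (0, 1) such that for all x ∈ X and all t > 0: m·(t^δ if t < a, and t^β if t ≥ a) ≤ f(x,t) ≤ M·(t^δ + t^β). -/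
/-!
Uniform convergence of `f(x, t) / t ^ δ` to the positive continuous `c₀` on the compact `X` traps
this ratio between two positive constants for small `t`, and likewise `f(x, t) / t ^ β` for large
`t`. On the compact remaining strip `X × [a, b]`, `0 < a`, the ratios are continuous and positive,
hence bounded between positive constants as well. The three regimes give the bounds.
-/

open Filter Topology Set

theorem IsCompact.exists_pos_bounds_of_pos {α : Type*} [TopologicalSpace α] {s : Set α}
    {g : α → ℝ} (hs : IsCompact s) (hg : ContinuousOn g s) (hpos : ∀ p ∈ s, 0 < g p) :
    ∃ m > 0, ∃ M > 0, ∀ p ∈ s, m ≤ g p ∧ g p ≤ M := by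
  obtain ⟨C, hC⟩ := hs.exists_bound_of_continuousOn hg
  rcases s.eq_empty_or_nonempty with rfl | hne
  · exact ⟨1, one_pos, 1, one_pos, by simp⟩
  obtain ⟨p₀, hp₀, hmin⟩ := hs.exists_isMinOn hne hg
  refine ⟨g p₀, hpos p₀ hp₀, max C 1, by positivity, fun p hp => ⟨hmin hp, ?_⟩⟩
  exact (le_abs_self _).trans ((hC p hp).trans (le_max_left _ _))

theorem TendstoUniformly.exists_pos_bounds_eventually {X ι : Type*} [TopologicalSpace X]
    [CompactSpace X] {l : Filter ι} {F : ι → X → ℝ} {c : X → ℝ} (hF : TendstoUniformly F c l)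
    (hc : Continuous c) (hpos : ∀ x, 0 < c x) :
    ∃ m > 0, ∃ M > 0, ∀ᶠ i in l, ∀ x, m ≤ F i x ∧ F i x ≤ M := by
  obtain ⟨m, hm, M, hM, hcb⟩ :=
    isCompact_univ.exists_pos_bounds_of_pos hc.continuousOn fun x _ => hpos x
  refine ⟨m / 2, half_pos hm, M + m / 2, by positivity, ?_⟩
  filter_upwards [Metric.tendstoUniformly_iff.1 hF (m / 2) (half_pos hm)] with i hi x
  have hx := hcb x (mem_univ x)
  have hdist := abs_lt.1 (Real.dist_eq _ _ ▸ hi x)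
  constructor <;> linarith [hx.1, hx.2, hdist.1, hdist.2]

section UniformLimits

variable {X : Type*} {F : ℝ → X → ℝ} {c : X → ℝ}

theorem tendstoUniformly_nhdsGT_zero_of_forall_abs_sub_lt
    (h : ∀ ε > 0, ∃ η > 0, ∀ x t, 0 < t → t < η → |F t x - c x| < ε) :
    TendstoUniformly F c (𝓝[>] 0) :=
  Metric.tendstoUniformly_iff.2 fun ε hε => by
    obtain ⟨η, hη, hF⟩ := h ε hε
    filter_upwards [Ioo_mem_nhdsGT hη] with t ht x
    rw [dist_comm, Real.dist_eq]
    exact hF x t ht.1 ht.2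

theorem tendstoUniformly_atTop_of_forall_abs_sub_lt
    (h : ∀ ε > 0, ∃ T, ∀ x t, T ≤ t → |F t x - c x| < ε) :
    TendstoUniformly F c atTop :=
  Metric.tendstoUniformly_iff.2 fun ε hε => by
    obtain ⟨T, hF⟩ := h ε hε
    filter_upwards [eventually_ge_atTop T] with t ht x
    rw [dist_comm, Real.dist_eq]
    exact hF x t ht

end UniformLimits

section RpowBounds

variable {X : Type*} [TopologicalSpace X] [CompactSpace X] {f : X × ℝ → ℝ}

theorem exists_rpow_bounds_eventually {l : Filter ℝ} {γ : ℝ} {c : X → ℝ}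
    (hl : ∀ᶠ t in l, 0 < t) (hf : TendstoUniformly (fun t x => f (x, t) / t ^ γ) c l)
    (hc : Continuous c) (hpos : ∀ x, 0 < c x) :
    ∃ m > 0, ∃ M > 0, ∀ᶠ t in l, ∀ x, m * t ^ γ ≤ f (x, t) ∧ f (x, t) ≤ M * t ^ γ := by
  obtain ⟨m, hm, M, hM, hb⟩ := hf.exists_pos_bounds_eventually hc hpos
  refine ⟨m, hm, M, hM, ?_⟩
  filter_upwards [hl, hb] with t ht hbt x
  have htγ : 0 < t ^ γ := Real.rpow_pos_of_pos ht γ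
  exact ⟨(le_div_iff₀ htγ).1 (hbt x).1, (div_le_iff₀ htγ).1 (hbt x).2⟩

theorem exists_rpow_bounds_on_Icc (hf : ContinuousOn f (univ ×ˢ Ioi 0))
    (hf_pos : ∀ x t, 0 < t → 0 < f (x, t)) (γ : ℝ) {a b : ℝ} (ha : 0 < a) :
    ∃ m > 0, ∃ M > 0, ∀ x, ∀ t ∈ Icc a b, m * t ^ γ ≤ f (x, t) ∧ f (x, t) ≤ M * t ^ γ := by
  set S : Set (X × ℝ) := univ ×ˢ Icc a b
  have hS_pos : ∀ p ∈ S, 0 < p.2 := fun p hp => ha.trans_le hp.2.1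
  have hS_sub : S ⊆ univ ×ˢ Ioi 0 := fun p hp => ⟨mem_univ _, hS_pos p hp⟩
  have hcont : ContinuousOn (fun p : X × ℝ => f p / p.2 ^ γ) S :=
    (hf.mono hS_sub).div (continuous_snd.continuousOn.rpow_const fun p hp =>
      Or.inl (hS_pos p hp).ne') fun p hp => (Real.rpow_pos_of_pos (hS_pos p hp) γ).ne'
  obtain ⟨m, hm, M, hM, hb⟩ := (isCompact_univ.prod isCompact_Icc).exists_pos_bounds_of_pos hcont
    fun p hp => div_pos (hf_pos p.1 p.2 (hS_pos p hp)) (Real.rpow_pos_of_pos (hS_pos p hp) γ)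
  refine ⟨m, hm, M, hM, fun x t ht => ?_⟩
  have htγ : 0 < t ^ γ := Real.rpow_pos_of_pos (ha.trans_le ht.1) γ
  exact ⟨(le_div_iff₀ htγ).1 (hb (x, t) ⟨mem_univ x, ht⟩).1,
    (div_le_iff₀ htγ).1 (hb (x, t) ⟨mem_univ x, ht⟩).2⟩

end RpowBounds

theorem stmt_5_general {X : Type*} [TopologicalSpace X] [CompactSpace X]
    (δ β : ℝ)
    (f : X × ℝ → ℝ)
    (hf_cont : ContinuousOn f (Set.univ ×ˢ Set.Ioi (0:ℝ)))
    (hf_pos : ∀ x : X, ∀ t : ℝ, 0 < t → 0 < f (x, t))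
    (c₀ cinf : X → ℝ) (hc₀cont : Continuous c₀) (hcinfcont : Continuous cinf)
    (hc₀pos : ∀ x, 0 < c₀ x) (hcinfpos : ∀ x, 0 < cinf x)
    (h0 : ∀ ε > 0, ∃ η > 0, ∀ x : X, ∀ t : ℝ, 0 < t → t < η →
      |f (x, t) / t ^ δ - c₀ x| < ε)
    (hinf : ∀ ε > 0, ∃ T : ℝ, ∀ x : X, ∀ t : ℝ, T ≤ t →
      |f (x, t) / t ^ β - cinf x| < ε) :
    ∃ m > (0:ℝ), ∃ M > (0:ℝ), ∃ a ∈ Set.Ioo (0:ℝ) 1, ∀ x : X, ∀ t : ℝ, 0 < t →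
      m * (if t < a then t ^ δ else t ^ β) ≤ f (x, t) ∧
      f (x, t) ≤ M * (t ^ δ + t ^ β) := by
  obtain ⟨m₀, hm₀, M₀, hM₀, hzero⟩ := exists_rpow_bounds_eventually self_mem_nhdsWithin
    (tendstoUniformly_nhdsGT_zero_of_forall_abs_sub_lt (F := fun t x => f (x, t) / t ^ δ) h0)
    hc₀cont hc₀pos
  obtain ⟨m₁, hm₁, M₁, hM₁, htop⟩ := exists_rpow_bounds_eventually (eventually_gt_atTop 0)
    (tendstoUniformly_atTop_of_forall_abs_sub_lt (F := fun t x => f (x, t) / t ^ β) hinf)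
    hcinfcont hcinfpos
  obtain ⟨η, hη, hη_sub⟩ := mem_nhdsGT_iff_exists_Ioo_subset.1 hzero
  obtain ⟨T, hT⟩ := eventually_atTop.1 htop
  set a := min (η / 2) (1 / 2)
  have ha : 0 < a := lt_min (half_pos hη) one_half_pos
  obtain ⟨m₂, hm₂, _, _, hmidβ⟩ := exists_rpow_bounds_on_Icc (b := T) hf_cont hf_pos β ha
  obtain ⟨_, _, M₂, hM₂, hmidδ⟩ := exists_rpow_bounds_on_Icc (b := T) hf_cont hf_pos δ ha
  set m := min (min m₀ m₁) m₂
  set M := max (max M₀ M₁) M₂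
  refine ⟨m, by positivity, M, by positivity, a, ⟨ha, min_lt_of_right_lt one_half_lt_one⟩,
    fun x t ht => ?_⟩
  have hδ : 0 < t ^ δ := Real.rpow_pos_of_pos ht δ
  have hβ : 0 < t ^ β := Real.rpow_pos_of_pos ht β
  have hM : M₀ ≤ M ∧ M₁ ≤ M ∧ M₂ ≤ M := by simp [M]
  rcases lt_or_ge t a with hta | hta
  · have htη : t < η := hta.trans_le ((min_le_left _ _).trans (half_le_self hη.le))
    obtain ⟨hlow, hup⟩ := hη_sub ⟨ht, htη⟩ x
    rw [if_pos hta]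
    exact ⟨(mul_le_mul_of_nonneg_right (by simp [m]) hδ.le).trans hlow, by nlinarith⟩
  rw [if_neg hta.not_gt]
  rcases lt_or_ge t T with htT | htT
  · exact ⟨(mul_le_mul_of_nonneg_right (by simp [m]) hβ.le).trans (hmidβ x t ⟨hta, htT.le⟩).1,
      by nlinarith [(hmidδ x t ⟨hta, htT.le⟩).2]⟩
  · obtain ⟨hlow, hup⟩ := hT t htT x
    exact ⟨(mul_le_mul_of_nonneg_right (by simp [m]) hβ.le).trans hlow, by nlinarith⟩

theorem stmt_5 {X : Type*} [TopologicalSpace X] [CompactSpace X] [Nonempty X]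
    (δ β : ℝ) (hδβ : δ ≤ β)
    (f : X × ℝ → ℝ)
    (hf_cont : ContinuousOn f (Set.univ ×ˢ Set.Ioi (0:ℝ)))
    (hf_pos : ∀ x : X, ∀ t : ℝ, 0 < t → 0 < f (x, t))
    (c₀ cinf : X → ℝ) (hc₀cont : Continuous c₀) (hcinfcont : Continuous cinf)
    (hc₀pos : ∀ x, 0 < c₀ x) (hcinfpos : ∀ x, 0 < cinf x)
    (h0 : ∀ ε > 0, ∃ η > 0, ∀ x : X, ∀ t : ℝ, 0 < t → t < η →
      |f (x, t) / t ^ δ - c₀ x| < ε)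
    (hinf : ∀ ε > 0, ∃ T : ℝ, ∀ x : X, ∀ t : ℝ, T ≤ t →
      |f (x, t) / t ^ β - cinf x| < ε) :
    ∃ m > (0:ℝ), ∃ M > (0:ℝ), ∃ a ∈ Set.Ioo (0:ℝ) 1, ∀ x : X, ∀ t : ℝ, 0 < t →
      m * (if t < a then t ^ δ else t ^ β) ≤ f (x, t) ∧
      f (x, t) ≤ M * (t ^ δ + t ^ β) :=
  stmt_5_general δ β f hf_cont hf_pos c₀ cinf hc₀cont hcinfcont hc₀pos hcinfpos h0 hinf
end
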